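/- A well-aligned data subcomplex containing a nontrivial data table is the image of a unique data section: well-alignedness (any two tables agreeing via attribute inclusions from a common sublist have equal reductions to that sublist, realized by a table in the subcomplex) is equivalent to the existence of a section σ of the projection p with σ(p(𝒳')) = 𝒳'; in particular all tables share the same nonzero total mass and each attribute list carries exactly one measure. -/

import Mathlib

/-!
Taking `T₀ = T₀₁ = T₀₂` with identity inclusions in well-alignedness shows that each
attribute list carries at most one measure of `S`; choosing it defines the section.
Conversely, a subcomplex is closed under reduction along every inclusion, so both reductions
to a common sublist lie in `S` and hence equal the section's value there. Over the empty list,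
whose value space is a point, reduction keeps only the total mass, so all masses agree.
-/

open MeasureTheory
open scoped ENNReal

variable (A : Type*) (Val : A → Type*) [∀ a, MeasurableSpace (Val a)]

/-- A data table: a finite attribute list `T : Fin n → A` together with a measure on the
product of the corresponding value spaces.  (The level `n` is the length of the list;
`n = 0` is the empty list, whose value space is a singleton.) -/
def DT : Type _ := Σ n : ℕ, Σ T : Fin n → A, Measure (∀ k, Val (T k))

/-- Face map `d_i`: delete the `i`-th attribute and marginalize the measure. -/
noncomputable def face {n : ℕ} (T : Fin (n+1) → A) (i : Fin (n+1))
    (τ : Measure (∀ k, Val (T k))) : Measure (∀ k : Fin n, Val (T (i.succAbove k))) :=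
  τ.map fun x k => x (i.succAbove k)

/-- Degeneracy map `s_i`: repeat the `i`-th attribute and push the measure forward along
the diagonal duplication (Dirac diagonal). -/
noncomputable def degen {n : ℕ} (T : Fin n → A) (i : Fin n)
    (τ : Measure (∀ k, Val (T k))) : Measure (∀ k : Fin (n+1), Val (T (i.predAbove k))) :=
  τ.map fun x k => x (i.predAbove k)

/-- Reduction (marginalization) along an attribute inclusion `ι`. -/
noncomputable def red {m n : ℕ} (T : Fin n → A) (ι : Fin m → Fin n)
    (τ : Measure (∀ k, Val (T k))) : Measure (∀ k : Fin m, Val (T (ι k))) :=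
  τ.map fun x k => x (ι k)

/-- A data subcomplex: a collection of data tables closed under the face
(marginalization) and degeneracy (diagonal) maps. -/
def IsSubcomplex (S : Set (DT A Val)) : Prop :=
  (∀ (n : ℕ) (T : Fin (n+1) → A) (τ : Measure (∀ k, Val (T k))) (i : Fin (n+1)),
      ⟨n+1, T, τ⟩ ∈ S → ⟨n, T ∘ i.succAbove, face A Val T i τ⟩ ∈ S) ∧
  (∀ (n : ℕ) (T : Fin n → A) (τ : Measure (∀ k, Val (T k))) (i : Fin n),
      ⟨n, T, τ⟩ ∈ S → ⟨n+1, T ∘ i.predAbove, degen A Val T i τ⟩ ∈ S)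

/-- The combinatorial data of a merge of two attribute inclusions
`ι01 : T₀ ↪ T₀₁`, `ι02 : T₀ ↪ T₀₂` into a common list of length `n012`: order-preserving
inclusions of the two lists whose images cover the merged index set, agree on the common
sublist, and overlap exactly in it. -/
structure MergeTop (n0 n01 n02 n012 : ℕ)
    (ι01 : Fin n0 → Fin n01) (ι02 : Fin n0 → Fin n02) : Type where
  μ01 : Fin n01 → Fin n012
  μ02 : Fin n02 → Fin n012
  mono01 : StrictMono μ01
  mono02 : StrictMono μ02
  comm : μ01 ∘ ι01 = μ02 ∘ ι02
  cover : Set.range μ01 ∪ Set.range μ02 = Set.univ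
  inter : Set.range μ01 ∩ Set.range μ02 = Set.range (μ01 ∘ ι01)

/-- The strong join condition: for every pair of member tables that are well-aligned along
a common sublist (their reductions to it agree), *every* join of them — every measure on a
merged list reducing to the two given measures — is again a member. -/
def StrongJoinCondition (S : Set (DT A Val)) : Prop :=
  ∀ {n0 n01 n02 n012 : ℕ} (ι01 : Fin n0 → Fin n01) (ι02 : Fin n0 → Fin n02),
    StrictMono ι01 → StrictMono ι02 →
    ∀ (M : MergeTop n0 n01 n02 n012 ι01 ι02) (T012 : Fin n012 → A)
      (τ01 : Measure (∀ k : Fin n01, Val (T012 (M.μ01 k))))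
      (τ02 : Measure (∀ k : Fin n02, Val (T012 (M.μ02 k)))),
      ⟨n01, T012 ∘ M.μ01, τ01⟩ ∈ S → ⟨n02, T012 ∘ M.μ02, τ02⟩ ∈ S →
      HEq (red A Val (T012 ∘ M.μ01) ι01 τ01) (red A Val (T012 ∘ M.μ02) ι02 τ02) →
      ∀ τ012 : Measure (∀ k, Val (T012 k)),
        red A Val T012 M.μ01 τ012 = τ01 → red A Val T012 M.μ02 τ012 = τ02 →
        ⟨n012, T012, τ012⟩ ∈ S

/-- Well-alignedness: any two member tables with attribute inclusions from a common
sublist have equal reductions to that sublist, realized by a member table over it. -/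
def WellAligned (S : Set (DT A Val)) : Prop :=
  ∀ {n0 n01 n02 : ℕ} (T01 : Fin n01 → A) (T02 : Fin n02 → A)
    (τ01 : Measure (∀ k, Val (T01 k))) (τ02 : Measure (∀ k, Val (T02 k)))
    (ι01 : Fin n0 → Fin n01) (ι02 : Fin n0 → Fin n02),
    StrictMono ι01 → StrictMono ι02 → T01 ∘ ι01 = T02 ∘ ι02 →
    ⟨n01, T01, τ01⟩ ∈ S → ⟨n02, T02, τ02⟩ ∈ S →
    ∃ τ0 : Measure (∀ k : Fin n0, Val (T01 (ι01 k))),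
      ⟨n0, T01 ∘ ι01, τ0⟩ ∈ S ∧
      red A Val T01 ι01 τ01 = τ0 ∧ HEq (red A Val T02 ι02 τ02) τ0

/-- `σ(p(S)) = S`. -/
def IsImageOfSection (S : Set (DT A Val))
    (σ : ∀ (n : ℕ) (T : Fin n → A), Measure (∀ k, Val (T k))) : Prop :=
  (∀ x ∈ S, x.2.2 = σ x.1 x.2.1) ∧
    ∀ (n : ℕ) (T : Fin n → A) (τ : Measure (∀ k, Val (T k))),
      ⟨n, T, τ⟩ ∈ S → ⟨n, T, σ n T⟩ ∈ S

section

variable {A Val}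

lemma measurable_restrict_pi {m n : ℕ} (T : Fin n → A) (ι : Fin m → Fin n) :
    Measurable fun (x : ∀ k, Val (T k)) (k : Fin m) => x (ι k) :=
  measurable_pi_lambda _ fun k => measurable_pi_apply (ι k)

lemma red_id {n : ℕ} (T : Fin n → A) (τ : Measure (∀ k, Val (T k))) :
    red A Val T id τ = τ :=
  Measure.map_id

lemma red_red {l m n : ℕ} (T : Fin n → A) (κ : Fin m → Fin n) (ι : Fin l → Fin m)
    (τ : Measure (∀ k, Val (T k))) :
    red A Val (T ∘ κ) ι (red A Val T κ τ) = red A Val T (κ ∘ ι) τ :=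
  Measure.map_map (measurable_restrict_pi _ _) (measurable_restrict_pi _ _)

lemma red_apply_univ {m n : ℕ} (T : Fin n → A) (ι : Fin m → Fin n)
    (τ : Measure (∀ k, Val (T k))) :
    red A Val T ι τ Set.univ = τ Set.univ := by
  rw [red, Measure.map_apply (measurable_restrict_pi T ι) MeasurableSet.univ, Set.preimage_univ]

lemma measure_univ_eq_of_heq {n : ℕ} {T T' : Fin n → A} (hT : T = T')
    {μ : Measure (∀ k, Val (T k))} {ν : Measure (∀ k, Val (T' k))} (h : μ ≍ ν) :
    μ Set.univ = ν Set.univ := by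
  subst hT
  rw [eq_of_heq h]

lemma mk_red_eq_of_surjective {m n : ℕ} {ι : Fin m → Fin n} (hι : StrictMono ι)
    (hsurj : Function.Surjective ι) (T : Fin n → A) (τ : Measure (∀ k, Val (T k))) :
    (⟨m, T ∘ ι, red A Val T ι τ⟩ : DT A Val) = ⟨n, T, τ⟩ := by
  obtain rfl : m = n := by
    simpa using Fintype.card_of_bijective ⟨hι.injective, hsurj⟩
  obtain rfl : ι = id := hι.eq_id
  rw [red_id]
  rfl

lemma Fin.exists_succAbove_comp_of_not_surjective {m n : ℕ} {ι : Fin m → Fin (n + 1)}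
    (hι : StrictMono ι) (hsurj : ¬ Function.Surjective ι) :
    ∃ (i : Fin (n + 1)) (ι' : Fin m → Fin n), ι = i.succAbove ∘ ι' ∧ StrictMono ι' := by
  obtain ⟨i, hi⟩ := not_forall.mp hsurj
  have hrange : Set.range ι ⊆ Set.range i.succAbove := by
    rw [Fin.range_succAbove]
    rintro _ ⟨a, rfl⟩ ha
    exact hi ⟨a, ha⟩
  obtain ⟨ι', rfl⟩ := Set.range_subset_range_iff_exists_comp.mp hrange
  exact ⟨i, ι', rfl, fun a b hab => Fin.succAbove_lt_succAbove_iff.mp (hι hab)⟩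

/-- Every strictly monotone map between `Fin`s is a composite of `succAbove`s, i.e. of
face maps. -/
lemma IsSubcomplex.red_mem {S : Set (DT A Val)} (hS : IsSubcomplex A Val S) {n m : ℕ}
    {ι : Fin m → Fin n} (hι : StrictMono ι) {T : Fin n → A} {τ : Measure (∀ k, Val (T k))}
    (hmem : ⟨n, T, τ⟩ ∈ S) : ⟨m, T ∘ ι, red A Val T ι τ⟩ ∈ S := by
  induction n generalizing m with
  | zero =>
    rwa [mk_red_eq_of_surjective hι fun j => j.elim0]
  | succ n ih =>
    by_cases hsurj : Function.Surjective ι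
    · rwa [mk_red_eq_of_surjective hι hsurj]
    obtain ⟨i, ι', rfl, hι'⟩ := Fin.exists_succAbove_comp_of_not_surjective hι hsurj
    rw [← red_red]
    exact ih hι' (hS.1 n T τ i hmem)

variable {S : Set (DT A Val)}

lemma WellAligned.eq_of_mem (hwa : WellAligned A Val S) {n : ℕ} {T : Fin n → A}
    {τ τ' : Measure (∀ k, Val (T k))} (h : ⟨n, T, τ⟩ ∈ S) (h' : ⟨n, T, τ'⟩ ∈ S) :
    τ = τ' := by
  obtain ⟨τ₀, -, hτ, hτ'⟩ := hwa T T τ τ' id id strictMono_id strictMono_id rfl h h'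
  rw [red_id] at hτ
  rw [hτ, ← eq_of_heq hτ', red_id]

lemma WellAligned.measure_univ_eq (hwa : WellAligned A Val S) {x y : DT A Val}
    (hx : x ∈ S) (hy : y ∈ S) : x.2.2 Set.univ = y.2.2 Set.univ := by
  obtain ⟨n, T, τ⟩ := x
  obtain ⟨n', T', τ'⟩ := y
  obtain ⟨τ₀, -, hτ, hτ'⟩ := hwa T T' τ τ' Fin.elim0 Fin.elim0 (fun a => a.elim0)
    (fun a => a.elim0) (Subsingleton.elim _ _) hx hy
  calc τ Set.univ = τ₀ Set.univ := by rw [← hτ, red_apply_univ]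
    _ = τ' Set.univ := by
      rw [← measure_univ_eq_of_heq (Subsingleton.elim _ _) hτ', red_apply_univ]

lemma WellAligned.exists_isImageOfSection (hwa : WellAligned A Val S) :
    ∃ σ, IsImageOfSection A Val S σ := by
  classical
  refine ⟨fun n T => if h : ∃ τ, (⟨n, T, τ⟩ : DT A Val) ∈ S then h.choose else 0, ?_, ?_⟩
  · rintro ⟨n, T, τ⟩ hmem
    have hex : ∃ τ', (⟨n, T, τ'⟩ : DT A Val) ∈ S := ⟨τ, hmem⟩
    show τ = _
    simp only [dif_pos hex]
    exact hwa.eq_of_mem hmem hex.choose_spec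
  · intro n T τ hmem
    have hex : ∃ τ', (⟨n, T, τ'⟩ : DT A Val) ∈ S := ⟨τ, hmem⟩
    simp only [dif_pos hex]
    exact hex.choose_spec

lemma IsImageOfSection.wellAligned (hS : IsSubcomplex A Val S)
    {σ : ∀ (n : ℕ) (T : Fin n → A), Measure (∀ k, Val (T k))}
    (hσ : IsImageOfSection A Val S σ) : WellAligned A Val S := by
  intro n₀ n₁ n₂ T₁ T₂ τ₁ τ₂ ι₁ ι₂ hι₁ hι₂ hT h₁ h₂
  have hred₁ := hS.red_mem hι₁ h₁
  have hσ₁ : red A Val T₁ ι₁ τ₁ = σ n₀ (T₁ ∘ ι₁) := hσ.1 _ hred₁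
  have hσ₂ : red A Val T₂ ι₂ τ₂ = σ n₀ (T₂ ∘ ι₂) := hσ.1 _ (hS.red_mem hι₂ h₂)
  refine ⟨_, hred₁, rfl, ?_⟩
  rw [hσ₁, hσ₂]
  exact congr_arg_heq (σ n₀) hT.symm

end

theorem well_aligned_iff_section
    (S : Set (DT A Val)) (hsub : IsSubcomplex A Val S)
    (hne : ∃ x ∈ S, x.2.2 ≠ 0) :
    (WellAligned A Val S ↔
      ∃ σ : ∀ (n : ℕ) (T : Fin n → A), Measure (∀ k, Val (T k)),
        (∀ x ∈ S, x.2.2 = σ x.1 x.2.1) ∧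
        (∀ (n : ℕ) (T : Fin n → A) (τ : Measure (∀ k, Val (T k))),
          ⟨n, T, τ⟩ ∈ S → ⟨n, T, σ n T⟩ ∈ S)) ∧
    (WellAligned A Val S →
      ((∀ (n : ℕ) (T : Fin n → A) (τ τ' : Measure (∀ k, Val (T k))),
          ⟨n, T, τ⟩ ∈ S → ⟨n, T, τ'⟩ ∈ S → τ = τ') ∧
        ∃ M : ℝ≥0∞, M ≠ 0 ∧ ∀ x ∈ S, x.2.2 Set.univ = M)) := by
  refine ⟨⟨WellAligned.exists_isImageOfSection,
      fun ⟨_, hσ⟩ => IsImageOfSection.wellAligned hsub hσ⟩,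
    fun hwa => ⟨fun _ _ _ _ => hwa.eq_of_mem, ?_⟩⟩
  obtain ⟨x₀, hx₀, hx₀_ne⟩ := hne
  exact ⟨x₀.2.2 Set.univ, Measure.measure_univ_ne_zero.mpr hx₀_ne,
    fun x hx => hwa.measure_univ_eq hx hx₀⟩
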